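/- Fix natural numbers n, d with d ≤ n, let u, v be vertices of Q_n with Hamming distance d, and let M_{n,l,d} denote the number of walks of length l from u to v in Q_n. Then for every real x, the series Σ_{l=0}^{∞} M_{n,l,d} · x^l / l! converges absolutely and Σ_{l=0}^{∞} M_{n,l,d} · x^l / l! = sinh(x)^d · cosh(x)^{n−d}. -/

import Mathlib

open SimpleGraph Finset

/-- The `n`-dimensional hypercube graph: vertices are `{0,1}^n`, two vertices being adjacent
iff they differ in exactly one coordinate (Hamming distance `1`). -/
def cubeGraph (n : ℕ) : SimpleGraph (Fin n → Bool) where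
  Adj u v := hammingDist u v = 1
  symm := ⟨by intro u v h; rwa [hammingDist_comm]⟩
  loopless := ⟨by intro u h; simp [hammingDist_self] at h⟩

/-- The number of walks of length `l` from `u` to `v` in the `n`-dimensional hypercube. -/
noncomputable def walkCount (n l : ℕ) (u v : Fin n → Bool) : ℕ :=
  Nat.card {p : (cubeGraph n).Walk u v // p.length = l}

/-!
The Walsh functions `χ_S(u) = ∏_{i ∈ S} (-1)^{u_i}` are eigenvectors of the adjacency matrix of
`Q_n`, with eigenvalue `n - 2|S|`, and they are orthogonal with `∑_S χ_S(u) χ_S(v) = 2^n [u = v]`.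
Hence the number of walks of length `l` from `u` to `v` is
`2^{-n} ∑_S χ_S(u) χ_S(v) (n - 2|S|)^l`, and summing the exponential series termwise gives
`2^{-n} ∑_S χ_S(u) χ_S(v) e^{(n - 2|S|) x}`. This sum factors over the coordinates as
`∏_i (e^x ± e^{-x}) / 2`, with the sign `-` exactly at the `d` coordinates where `u` and `v` differ.
-/

instance (n : ℕ) : DecidableRel (cubeGraph n).Adj :=
  fun u v => inferInstanceAs (Decidable (hammingDist u v = 1))

lemma hasSum_sum_mul_pow_mul_pow_div_factorial {κ : Type*} (s : Finset κ) (c r : κ → ℝ)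
    (x : ℝ) :
    HasSum (fun l : ℕ => (∑ i ∈ s, c i * r i ^ l) * x ^ l / l.factorial)
      (∑ i ∈ s, c i * Real.exp (r i * x)) := by
  have hexp (i : κ) : HasSum (fun l : ℕ => c i * ((r i * x) ^ l / l.factorial))
      (c i * Real.exp (r i * x)) := by
    rw [Real.exp_eq_exp_ℝ]
    exact (NormedSpace.expSeries_div_hasSum_exp (r i * x)).mul_left (c i)
  convert hasSum_sum fun i (_ : i ∈ s) => hexp i using 1
  funext l
  rw [sum_mul, sum_div]
  exact sum_congr rfl fun i _ => by ring

section Walsh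

variable {ι : Type*}

noncomputable def walsh (S : Finset ι) (u : ι → Bool) : ℝ :=
  ∏ i ∈ S, if u i then -1 else 1

variable [DecidableEq ι]

lemma update_not_injective (u : ι → Bool) :
    Function.Injective fun i => Function.update u i (!u i) := by
  intro i j h
  by_contra hij
  have := congrFun h i
  simp [Function.update_of_ne hij] at this

lemma walsh_update_not (S : Finset ι) (u : ι → Bool) (i : ι) :
    walsh S (Function.update u i (!u i)) = (if i ∈ S then -1 else 1) * walsh S u := by
  have hsign (j : ι) : (if Function.update u i (!u i) j then (-1 : ℝ) else 1) =
      Function.update (fun j => if u j then (-1 : ℝ) else 1) i (-if u i then -1 else 1) j := by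
    rcases eq_or_ne j i with rfl | h
    · cases u j <;> simp
    · simp [h]
  simp only [walsh, hsign]
  by_cases hi : i ∈ S
  · rw [if_pos hi, prod_update_of_mem hi, sdiff_singleton_eq_erase,
      ← mul_prod_erase S (fun j => if u j then (-1 : ℝ) else 1) hi]
    ring
  · rw [if_neg hi, prod_update_of_notMem hi, one_mul]

variable [Fintype ι]

lemma hammingDist_eq_one_iff_exists_update_not (u w : ι → Bool) :
    hammingDist u w = 1 ↔ ∃ i, w = Function.update u i (!u i) := by
  rw [hammingDist, card_eq_one]
  constructor
  · rintro ⟨i, hi⟩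
    refine ⟨i, funext fun j => ?_⟩
    have hj : u j ≠ w j ↔ j = i := by simpa using Finset.ext_iff.1 hi j
    rcases eq_or_ne j i with rfl | h
    · rw [Function.update_self, Bool.eq_not_iff]
      exact (hj.2 rfl).symm
    · rw [Function.update_of_ne h]
      exact (not_not.1 (mt hj.1 h)).symm
  · rintro ⟨i, rfl⟩
    refine ⟨i, ext fun j => ?_⟩
    rcases eq_or_ne j i with rfl | h <;> simp [*]

lemma sum_walsh_update_not (S : Finset ι) (u : ι → Bool) :
    ∑ i, walsh S (Function.update u i (!u i)) =
      (Fintype.card ι - 2 * #S : ℝ) * walsh S u := by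
  simp only [walsh_update_not, ← sum_mul]
  congr 1
  rw [← sum_add_sum_compl S, sum_ite_of_true fun _ h => h,
    sum_ite_of_false fun _ h => mem_compl.1 h]
  simp only [sum_const, card_compl, nsmul_eq_mul, Nat.cast_sub (card_le_univ S)]
  ring

/-- Specialises to orthogonality at `a = b = 1` and to `sinh^d cosh^(n-d)` at
`a = e^{-x}, b = e^x`. -/
lemma sum_walsh_mul_walsh_mul_pow_mul_pow (u v : ι → Bool) (a b : ℝ) :
    ∑ S : Finset ι, walsh S u * walsh S v * (a ^ #S * b ^ (Fintype.card ι - #S)) =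
      (b + a) ^ (Fintype.card ι - hammingDist u v) * (b - a) ^ hammingDist u v := by
  have hfactor (i : ι) : (if u i then -1 else 1) * (if v i then -1 else 1) * a + b =
      if u i = v i then b + a else b - a := by
    cases u i <;> cases v i <;>
      simp only [if_true, if_false, Bool.false_eq_true, Bool.true_eq_false] <;> ring
  have hcard : #{i | u i = v i} = Fintype.card ι - hammingDist u v := by
    have := card_filter_add_card_filter_not (s := univ) fun i => u i = v i
    simp only [card_univ] at this
    simp only [hammingDist, ne_eq]
    omega
  calc _ = ∑ S ∈ univ.powerset,
        (∏ i ∈ S, (if u i then -1 else 1) * (if v i then -1 else 1) * a) * ∏ i ∈ univ \ S, b := by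
        rw [powerset_univ]
        refine sum_congr rfl fun S _ => ?_
        rw [prod_mul_distrib, prod_mul_distrib, prod_const, prod_const, card_univ_sdiff, walsh,
          walsh]
        ring
    _ = ∏ i, if u i = v i then b + a else b - a := by
        rw [← prod_add]
        simp only [hfactor]
    _ = _ := by
        rw [prod_ite, prod_const, prod_const, hcard]
        rfl

lemma sum_walsh_mul_walsh (u v : ι → Bool) :
    ∑ S : Finset ι, walsh S u * walsh S v = if u = v then 2 ^ Fintype.card ι else 0 := by
  have := sum_walsh_mul_walsh_mul_pow_mul_pow u v 1 1
  simp only [one_pow, mul_one, sub_self] at this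
  rw [this]
  split_ifs with h
  · subst h
    norm_num
  · rw [zero_pow (hammingDist_ne_zero.2 h), mul_zero]

lemma sum_walsh_mul_walsh_mul_exp (u v : ι → Bool) (x : ℝ) :
    ∑ S : Finset ι, (2 ^ Fintype.card ι)⁻¹ * walsh S u * walsh S v *
        Real.exp ((Fintype.card ι - 2 * #S : ℝ) * x) =
      Real.sinh x ^ hammingDist u v * Real.cosh x ^ (Fintype.card ι - hammingDist u v) := by
  have hexp (S : Finset ι) : Real.exp ((Fintype.card ι - 2 * #S : ℝ) * x) =
      Real.exp (-x) ^ #S * Real.exp x ^ (Fintype.card ι - #S) := by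
    rw [← Real.exp_nat_mul, ← Real.exp_nat_mul, ← Real.exp_add, Nat.cast_sub (card_le_univ S)]
    ring_nf
  have hpow : (2 : ℝ) ^ Fintype.card ι =
      2 ^ hammingDist u v * 2 ^ (Fintype.card ι - hammingDist u v) := by
    rw [← pow_add, Nat.add_sub_cancel' hammingDist_le_card_fintype]
  calc _ = (2 ^ Fintype.card ι)⁻¹ * ∑ S : Finset ι, walsh S u * walsh S v *
        (Real.exp (-x) ^ #S * Real.exp x ^ (Fintype.card ι - #S)) := by
        rw [mul_sum]
        exact sum_congr rfl fun S _ => by rw [hexp]; ring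
    _ = _ := by
        rw [sum_walsh_mul_walsh_mul_pow_mul_pow, Real.sinh_eq, Real.cosh_eq, hpow, div_pow,
          div_pow]
        field_simp

end Walsh

lemma cubeGraph_neighborFinset {n : ℕ} (u : Fin n → Bool) :
    (cubeGraph n).neighborFinset u = univ.image fun i => Function.update u i (!u i) := by
  ext w
  simp only [mem_neighborFinset, mem_image, mem_univ, true_and, eq_comm (b := w)]
  exact hammingDist_eq_one_iff_exists_update_not u w

lemma cubeGraph_adjMatrix_pow_apply {n : ℕ} (l : ℕ) (u v : Fin n → Bool) :
    ((cubeGraph n).adjMatrix ℝ ^ l) u v =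
      ∑ S : Finset (Fin n), (2 ^ n)⁻¹ * walsh S u * walsh S v * (n - 2 * #S : ℝ) ^ l := by
  induction l generalizing u with
  | zero =>
    simp only [pow_zero, mul_one, Matrix.one_apply, mul_assoc, ← mul_sum, sum_walsh_mul_walsh,
      Fintype.card_fin]
    split_ifs <;> simp
  | succ l ih =>
    rw [pow_succ', adjMatrix_mul_apply, cubeGraph_neighborFinset,
      sum_image fun i _ j _ h => update_not_injective u h]
    simp only [ih]
    rw [sum_comm]
    refine sum_congr rfl fun S _ => ?_
    simp only [← sum_mul, ← mul_sum, sum_walsh_update_not, Fintype.card_fin]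
    ring

lemma walkCount_eq_adjMatrix_pow_apply (n l : ℕ) (u v : Fin n → Bool) :
    (walkCount n l u v : ℝ) = ((cubeGraph n).adjMatrix ℝ ^ l) u v := by
  rw [adjMatrix_pow_apply_eq_card_walk, walkCount, ← Nat.card_eq_fintype_card]
  rfl

theorem stanley_identity_general (n d : ℕ) (u v : Fin n → Bool)
    (huv : hammingDist u v = d) (x : ℝ) :
    (Summable fun l : ℕ => |(walkCount n l u v : ℝ) * x ^ l / (l.factorial : ℝ)|) ∧
      ∑' l : ℕ, (walkCount n l u v : ℝ) * x ^ l / (l.factorial : ℝ) =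
        Real.sinh x ^ d * Real.cosh x ^ (n - d) := by
  have hsum : HasSum (fun l : ℕ => (walkCount n l u v : ℝ) * x ^ l / l.factorial)
      (Real.sinh x ^ d * Real.cosh x ^ (n - d)) := by
    convert hasSum_sum_mul_pow_mul_pow_div_factorial univ
      (fun S : Finset (Fin n) => (2 ^ n)⁻¹ * walsh S u * walsh S v) (fun S => n - 2 * #S) x
      using 1
    · funext l
      rw [walkCount_eq_adjMatrix_pow_apply, cubeGraph_adjMatrix_pow_apply]
    · simpa only [huv, Fintype.card_fin] using (sum_walsh_mul_walsh_mul_exp u v x).symm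
  exact ⟨hsum.summable.abs, hsum.tsum_eq⟩

/-- **Stanley's identity**: for vertices `u, v` of `Q_n` at Hamming distance `d ≤ n`, the series
`Σ_{l=0}^{∞} M_{n,l,d} · x^l / l!` converges absolutely for every real `x` and its sum equals
`sinh(x)^d · cosh(x)^{n−d}`, where `M_{n,l,d}` is the number of walks of length `l`
from `u` to `v`. -/
theorem stanley_identity (n d : ℕ) (hd : d ≤ n) (u v : Fin n → Bool)
    (huv : hammingDist u v = d) (x : ℝ) :
    (Summable fun l : ℕ => |(walkCount n l u v : ℝ) * x ^ l / (l.factorial : ℝ)|) ∧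
      ∑' l : ℕ, (walkCount n l u v : ℝ) * x ^ l / (l.factorial : ℝ) =
        Real.sinh x ^ d * Real.cosh x ^ (n - d) :=
  stanley_identity_general n d u v huv x
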